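/- Let R be a commutative ring, I ⊆ R an ideal with I^n = 0 for some n > 0, and M an R-module. Let N and N′ be direct summands of M whose images in M/IM coincide. Then any R-linear projection p : M → N (i.e. p restricted to N is the identity) restricts to an isomorphism N′ ≅ N. -/

import Mathlib

/-!
Put `J = I • M` and let `q` be a projection of `M` onto `N′`. Every `x ∈ N′` is congruent
mod `J` to an element of `N`, which `p` fixes, so `p x ≡ x` mod `J` and therefore
`q (p x) - x = q (p x - x) ∈ I • N′`. Thus `q ∘ p` is the identity of `N′` modulo `I • N′`, and
symmetrically `p ∘ q` is the identity of `N` modulo `I • N`. An endomorphism of a module `A`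
with image in `I • A` is nilpotent once `I` is, so both composites are units and
`p : N′ → N` is bijective.
-/

open Submodule

namespace Module.End

theorem map_pow_top_le_pow_smul_top {R A : Type*} [CommSemiring R] [AddCommMonoid A]
    [Module R A] {I : Ideal R} {h : Module.End R A} (hh : LinearMap.range h ≤ I • ⊤) (k : ℕ) :
    (⊤ : Submodule R A).map (h ^ k) ≤ I ^ k • ⊤ := by
  induction k with
  | zero => simp
  | succ k ih =>
    calc (⊤ : Submodule R A).map (h ^ (k + 1)) = ((⊤ : Submodule R A).map (h ^ k)).map h := by
          rw [pow_succ', Module.End.mul_eq_comp, map_comp]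
      _ ≤ (I ^ k • ⊤ : Submodule R A).map h := map_mono ih
      _ = I ^ k • LinearMap.range h := by rw [map_smul'', LinearMap.range_eq_map]
      _ ≤ I ^ k • I • ⊤ := smul_mono_right _ hh
      _ = I ^ (k + 1) • ⊤ := by rw [pow_succ, ← smul_eq_mul, smul_assoc]

theorem isNilpotent_of_range_le_smul_top {R A : Type*} [CommSemiring R] [AddCommMonoid A]
    [Module R A] {I : Ideal R} (hI : IsNilpotent I) {h : Module.End R A}
    (hh : LinearMap.range h ≤ I • ⊤) : IsNilpotent h := by
  obtain ⟨n, hn⟩ := hI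
  have hpow := map_pow_top_le_pow_smul_top hh n
  rw [hn, Ideal.zero_eq_bot, bot_smul, ← LinearMap.range_eq_map, le_bot_iff,
    LinearMap.range_eq_bot] at hpow
  exact ⟨n, hpow⟩

theorem isUnit_of_range_sub_one_le_smul_top {R A : Type*} [CommRing R] [AddCommGroup A]
    [Module R A] {I : Ideal R} (hI : IsNilpotent I) {h : Module.End R A}
    (hh : LinearMap.range (h - 1) ≤ I • ⊤) : IsUnit h := by
  simpa using (isNilpotent_of_range_le_smul_top hI hh).isUnit_one_add

end Module.End

namespace LinearMap.IsProj

variable {R M : Type*} [CommRing R] [AddCommGroup M] [Module R M] {I : Ideal R}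
  {N N' : Submodule R M} {p q : M →ₗ[R] M}

theorem apply_sub_self_mem_smul_top (hp : IsProj N p) {x : M} (hx : x ∈ N ⊔ I • ⊤) :
    p x - x ∈ I • (⊤ : Submodule R M) := by
  obtain ⟨y, hy, z, hz, rfl⟩ := mem_sup.mp hx
  have hpz : p z ∈ I • (⊤ : Submodule R M) := smul_top_le_comap_smul_top I p hz
  rw [map_add, hp.map_id y hy, add_sub_add_left_eq_sub]
  exact sub_mem hpz hz

theorem apply_mem_smul_of_mem_smul_top (hq : IsProj N' q) {z : M}
    (hz : z ∈ I • (⊤ : Submodule R M)) : q z ∈ I • N' := by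
  simpa [hq.range] using mem_map_of_mem (f := q) hz

theorem isUnit_restrict_comp_restrict (hI : IsNilpotent I) (hp : IsProj N p) (hq : IsProj N' q)
    (hN' : N' ≤ N ⊔ I • ⊤) :
    IsUnit ((q.restrict fun x _ ↦ hq.map_mem x : N →ₗ[R] N') ∘ₗ
      (p.restrict fun x _ ↦ hp.map_mem x : N' →ₗ[R] N)) := by
  refine Module.End.isUnit_of_range_sub_one_le_smul_top hI ?_
  rintro _ ⟨x, rfl⟩
  have hqp : q (p x) - x = q (p x - x) := by rw [map_sub, hq.map_id x x.2]
  simpa [mem_smul_top_iff, hqp] using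
    hq.apply_mem_smul_of_mem_smul_top (hp.apply_sub_self_mem_smul_top (hN' x.2))

theorem bijective_restrict_of_sup_eq (hI : IsNilpotent I) (hp : IsProj N p) (hq : IsProj N' q)
    (hNN' : N ⊔ I • ⊤ = N' ⊔ I • ⊤) :
    Function.Bijective (p.restrict fun x _ ↦ hp.map_mem x : N' →ₗ[R] N) := by
  have hqp := (Module.End.isUnit_iff _).mp
    (isUnit_restrict_comp_restrict hI hp hq (le_sup_left.trans hNN'.ge))
  have hpq := (Module.End.isUnit_iff _).mp
    (isUnit_restrict_comp_restrict hI hq hp (le_sup_left.trans hNN'.le))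
  rw [LinearMap.coe_comp] at hqp hpq
  exact ⟨hqp.1.of_comp, hpq.2.of_comp⟩

end LinearMap.IsProj

theorem stmt_3_general {R M : Type*} [CommRing R] [AddCommGroup M] [Module R M]
    (I : Ideal R) (hI : ∃ n > 0, I ^ n = ⊥)
    (N N' : Submodule R M)
    (hN' : ∃ N₂, IsCompl N' N₂)
    (him : N.map (I • (⊤ : Submodule R M)).mkQ = N'.map (I • (⊤ : Submodule R M)).mkQ)
    (p : M →ₗ[R] M) (hpN : LinearMap.range p ≤ N) (hid : ∀ x ∈ N, p x = x) :
    ∃ e : N' ≃ₗ[R] N, ∀ x : N', (e x : M) = p x := by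
  obtain ⟨n, -, hn⟩ := hI
  obtain ⟨N₂, hc⟩ := hN'
  have hp : LinearMap.IsProj N p := ⟨fun x ↦ hpN ⟨x, rfl⟩, hid⟩
  have hq : LinearMap.IsProj N' (N'.projection N₂ hc) :=
    ⟨projection_apply_mem hc, fun _ hx ↦ projection_apply_of_mem_left hc hx⟩
  have hsup : N ⊔ I • ⊤ = N' ⊔ I • ⊤ := by
    simpa only [comap_map_mkQ, sup_comm] using congrArg (comap (I • ⊤ : Submodule R M).mkQ) him
  exact ⟨.ofBijective _ (hp.bijective_restrict_of_sup_eq ⟨n, hn⟩ hq hsup), fun _ ↦ rfl⟩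

/-- If `I` is nilpotent and `N`, `N′` are direct summands of `M` with the same image in
`M/IM`, then any projection of `M` onto `N` restricts to an isomorphism `N′ ≅ N`. -/
theorem stmt_3 {R M : Type*} [CommRing R] [AddCommGroup M] [Module R M]
    (I : Ideal R) (hI : ∃ n > 0, I ^ n = ⊥)
    (N N' : Submodule R M)
    (hN : ∃ N₂, IsCompl N N₂) (hN' : ∃ N₂, IsCompl N' N₂)
    (him : N.map (I • (⊤ : Submodule R M)).mkQ = N'.map (I • (⊤ : Submodule R M)).mkQ)
    (p : M →ₗ[R] M) (hpN : LinearMap.range p ≤ N) (hid : ∀ x ∈ N, p x = x) :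
    ∃ e : N' ≃ₗ[R] N, ∀ x : N', (e x : M) = p x :=
  stmt_3_general I hI N N' hN' him p hpN hid
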